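/- For every ε > 0 there exists a periodic point x ∈ X such that n_x(β(f) − f^{n_x}(x)/n_x) < ε, where f : X → ℝ is Lipschitz, n_x is the minimal period of x, and β(f) is the maximal ergodic average of f. -/

import Mathlib

open MeasureTheory Filter Real Topology
open scoped ENNReal

noncomputable section

abbrev X (d : ℕ) : Type := ℕ → Fin d

def shift {d : ℕ} (x : X d) : X d := fun n => x (n + 1)

def birkhoff {d : ℕ} (f : X d → ℝ) (n : ℕ) (x : X d) : ℝ :=
  ∑ i ∈ Finset.range n, f (shift^[i] x)

def IsPeriodic {d : ℕ} (x : X d) : Prop := ∃ n, 0 < n ∧ shift^[n] x = x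

def minPer {d : ℕ} (x : X d) : ℕ := Function.minimalPeriod shift x

def beta {d : ℕ} (f : X d → ℝ) : ℝ :=
  sSup {r : ℝ | ∃ μ : Measure (X d), IsProbabilityMeasure μ ∧ μ.map shift = μ ∧ r = ∫ x, f x ∂μ}

def Ifun {d : ℕ} (f : X d → ℝ) (x : X d) : ℝ :=
  (minPer x : ℝ) * beta f - birkhoff f (minPer x) x

def dtheta {d : ℕ} (θ : ℝ) (x y : X d) : ℝ :=
  letI : Decidable (x = y) := Classical.dec _
  if h : x = y then 0 else θ ^ Nat.find (Function.ne_iff.mp h)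

def LipWrt {d : ℕ} (θ C : ℝ) (f : X d → ℝ) : Prop :=
  ∀ x y, |f x - f y| ≤ C * dtheta θ x y

def periodize {d : ℕ} (n : ℕ) (w : Fin (n + 1) → Fin d) : X d :=
  fun i => w ⟨i % (n + 1), Nat.mod_lt i (Nat.succ_pos n)⟩

def pressure {d : ℕ} (g : X d → ℝ) : ℝ :=
  Filter.limsup (fun n : ℕ =>
    Real.log (∑ w : Fin (n + 1) → Fin d, Real.exp (birkhoff g (n + 1) (periodize n w))) / ((n : ℝ) + 1))
    Filter.atTop

def zetaVal {d : ℕ} (f : X d → ℝ) (c s : ℝ) (k : X d → ℝ) : ℝ :=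
  ∑' n : ℕ, ∑ w : Fin (n + 1) → Fin d,
    Real.exp (c * s * birkhoff f (n + 1) (periodize n w) - ((n : ℝ) + 1) * pressure (fun y => c * f y))
      * (birkhoff k (n + 1) (periodize n w) / ((n : ℝ) + 1))

def etaVal {d : ℕ} (f : X d → ℝ) (c : ℝ) (N : ℕ) (k : X d → ℝ) : ℝ :=
  ∑ n ∈ Finset.range N, ∑ w : Fin (n + 1) → Fin d,
    Real.exp (c * birkhoff f (n + 1) (periodize n w)) * (birkhoff k (n + 1) (periodize n w) / ((n : ℝ) + 1))

def piVal {d : ℕ} (f : X d → ℝ) (c : ℝ) (N : ℕ) (k : X d → ℝ) : ℝ :=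
  ∑ n ∈ Finset.range N, ∑ w : Fin (n + 1) → Fin d,
    Real.exp (c * birkhoff f (n + 1) (periodize n w) - ((n : ℝ) + 1) * pressure (fun y => c * f y))
      * (birkhoff k (n + 1) (periodize n w) / ((n : ℝ) + 1))

def cylSet {d : ℕ} (m : ℕ) (w : Fin m → Fin d) : Set (X d) :=
  {x : X d | ∀ i : Fin m, x i = w i}

def Itilde {d : ℕ} (θ : ℝ) (f : X d → ℝ) (x : X d) : EReal :=
  ⨆ ε : {e : ℝ // 0 < e},
    sInf {r : EReal | ∃ y : X d, IsPeriodic y ∧ dtheta θ x y ≤ ε.1 ∧ r = ((Ifun f y : ℝ) : EReal)}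

def orbitMeasure {d : ℕ} (x : X d) : Measure (X d) :=
  ((minPer x : ℝ≥0∞))⁻¹ • ∑ i ∈ Finset.range (minPer x), Measure.dirac (shift^[i] x)

/-!
Suppose every periodic point `p` satisfies `n_p β(f) - f^{n_p}(p) ≥ ε`. Then every periodic
orbit of period `n` has `f^n ≤ n β(f) - ε`, and closing up an arbitrary orbit segment into a
periodic one (bounded distortion for Lipschitz `f`) gives `f^n(y) ≤ n β(f) + C / (1 - θ)`.
By pigeonhole, every segment of length at least `d ^ m` contains two equal `m`-blocks; the loop
between them shadows a periodic orbit, so deleting it raises `f^n - n β(f)` by `ε / 2`. Starting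
from a segment with `f^N(x) > N β(f) - ε / 2` (which exists by the definition of `β` as a
supremum) and deleting `R` loops produces a segment with `f^n - n β(f) ≥ (R - 1) ε / 2`,
contradicting the upper bound for large `R`.
-/

lemma shift_iterate_apply {d : ℕ} (k : ℕ) (x : X d) (t : ℕ) :
    (shift^[k] x) t = x (t + k) := by
  induction k generalizing x with
  | zero => rfl
  | succ k ih => rw [Function.iterate_succ_apply, ih]; rfl

lemma continuous_shift {d : ℕ} : Continuous (shift (d := d)) :=
  continuous_pi fun n => continuous_apply (n + 1)

lemma continuous_birkhoff {d : ℕ} {f : X d → ℝ} (hf : Continuous f) (n : ℕ) :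
    Continuous (birkhoff f n) :=
  continuous_finsetSum _ fun k _ => hf.comp (continuous_shift.iterate k)

lemma birkhoff_add {d : ℕ} (f : X d → ℝ) (m n : ℕ) (x : X d) :
    birkhoff f (m + n) x = birkhoff f m x + birkhoff f n (shift^[m] x) :=
  birkhoffSum_add shift f m n x

lemma birkhoff_succ' {d : ℕ} (f : X d → ℝ) (n : ℕ) (x : X d) :
    birkhoff f (n + 1) x = f x + birkhoff f n (shift x) :=
  birkhoffSum_succ' shift f n x

lemma birkhoff_mul_of_isPeriodicPt {d : ℕ} (f : X d → ℝ) {m : ℕ} {p : X d}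
    (hp : Function.IsPeriodicPt shift m p) (k : ℕ) :
    birkhoff f (k * m) p = k * birkhoff f m p := by
  induction k with
  | zero => simp [birkhoff]
  | succ k ih =>
    rw [add_mul, one_mul, birkhoff_add, ih, (hp.const_mul k).eq]
    push_cast
    ring

def repeatBlock {d : ℕ} (y : X d) (p : ℕ) : X d := fun t => y (t % p)

lemma isPeriodicPt_repeatBlock {d : ℕ} (y : X d) (p : ℕ) :
    Function.IsPeriodicPt shift p (repeatBlock y p) := by
  funext t
  simp only [shift_iterate_apply, repeatBlock, Nat.add_mod_right]

lemma repeatBlock_apply_of_lt {d : ℕ} (y : X d) {p t : ℕ} (ht : t < p) :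
    repeatBlock y p t = y t :=
  congrArg y (Nat.mod_eq_of_lt ht)

lemma repeatBlock_apply_of_forall_lt {d : ℕ} {y : X d} {p m : ℕ}
    (h : ∀ t < m, y (t + p) = y t) : ∀ u < p + m, repeatBlock y p u = y u := by
  rcases Nat.eq_zero_or_pos p with rfl | hp
  · simp [repeatBlock]
  intro u
  induction u using Nat.strong_induction_on with
  | _ u ih =>
    intro hu
    rcases lt_or_ge u p with hup | hpu
    · exact repeatBlock_apply_of_lt y hup
    · obtain ⟨t, rfl⟩ := Nat.exists_eq_add_of_le' hpu
      rw [h t (by omega), ← ih t (by omega) (by omega)]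
      simp only [repeatBlock, Nat.add_mod_right]

lemma exists_block_repeat {d : ℕ} (y : X d) (m : ℕ) :
    ∃ i p, 0 < p ∧ i + p ≤ d ^ m ∧ ∀ t < m, y (i + p + t) = y (i + t) := by
  have hcard : Fintype.card (Fin m → Fin d) < Fintype.card (Fin (d ^ m + 1)) := by simp
  obtain ⟨a, b, hab, hblock⟩ := Fintype.exists_ne_map_eq_of_card_lt
    (fun a : Fin (d ^ m + 1) => fun t : Fin m => y (a + t)) hcard
  rcases lt_or_gt_of_ne hab with h | h
  · exact ⟨a, b - a, by omega, by omega, fun t ht => by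
      rw [show (a : ℕ) + (b - a) = b by omega]; exact (congrFun hblock ⟨t, ht⟩).symm⟩
  · exact ⟨b, a - b, by omega, by omega, fun t ht => by
      rw [show (b : ℕ) + (a - b) = a by omega]; exact congrFun hblock ⟨t, ht⟩⟩

lemma dtheta_le_pow {d : ℕ} {θ : ℝ} (hθ0 : 0 ≤ θ) (hθ1 : θ ≤ 1) {x y : X d} {k : ℕ}
    (h : ∀ r < k, x r = y r) : dtheta θ x y ≤ θ ^ k := by
  rw [dtheta]
  split_ifs with hxy
  · positivity
  · refine pow_le_pow_of_le_one hθ0 hθ1 ?_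
    by_contra! hlt
    exact Nat.find_spec (Function.ne_iff.mp hxy) (h _ hlt)

lemma dtheta_nonneg {d : ℕ} {θ : ℝ} (hθ : 0 ≤ θ) (x y : X d) : 0 ≤ dtheta θ x y := by
  rw [dtheta]
  split_ifs
  exacts [le_rfl, by positivity]

namespace LipWrt

variable {d : ℕ} {θ C : ℝ} {f : X d → ℝ}

lemma mono_const (hf : LipWrt θ C f) {C' : ℝ} (hC : C ≤ C') (hθ : 0 ≤ θ) :
    LipWrt θ C' f :=
  fun x y => (hf x y).trans (mul_le_mul_of_nonneg_right hC (dtheta_nonneg hθ x y))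

lemma abs_sub_le (hf : LipWrt θ C f) (hC : 0 ≤ C) (hθ0 : 0 ≤ θ) (hθ1 : θ ≤ 1) {x y : X d}
    {k : ℕ} (h : ∀ r < k, x r = y r) : |f x - f y| ≤ C * θ ^ k :=
  (hf x y).trans (mul_le_mul_of_nonneg_left (dtheta_le_pow hθ0 hθ1 h) hC)

lemma continuous (hf : LipWrt θ C f) (hC : 0 ≤ C) (hθ0 : 0 ≤ θ) (hθ1 : θ < 1) :
    Continuous f := by
  refine continuous_iff_continuousAt.mpr fun x => Metric.tendsto_nhds.mpr fun δ hδ => ?_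
  have hsmall : Tendsto (fun k : ℕ => C * θ ^ k) atTop (𝓝 0) := by
    simpa using (tendsto_pow_atTop_nhds_zero_of_lt_one hθ0 hθ1).const_mul C
  obtain ⟨k, hk⟩ := (hsmall.eventually (gt_mem_nhds hδ)).exists
  have hnear : ∀ᶠ y in 𝓝 x, ∀ r ∈ Set.Iio k, y r = x r :=
    (eventually_all_finite (Set.finite_Iio k)).mpr fun r _ =>
      tendsto_pure.mp (by simpa only [nhds_discrete] using (continuous_apply r).tendsto x)
  filter_upwards [hnear] with y hy
  exact (hf.abs_sub_le hC hθ0 hθ1.le fun r hr => hy r hr).trans_lt hk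

lemma abs_birkhoff_sub_le (hf : LipWrt θ C f) (hC : 0 ≤ C) (hθ0 : 0 ≤ θ) (hθ1 : θ < 1)
    {x y : X d} {n a : ℕ} (h : ∀ u < n + a, x u = y u) :
    |birkhoff f n x - birkhoff f n y| ≤ C * θ ^ a / (1 - θ) := by
  have hgeom : ∀ n (x y : X d), (∀ u < n + a, x u = y u) → |birkhoff f n x - birkhoff f n y|
      ≤ C * θ ^ a * ∑ i ∈ Finset.range n, θ ^ (i + 1) := by
    intro n
    induction n with
    | zero => simp [birkhoff]
    | succ n ih =>
      intro x y h
      have hhead := hf.abs_sub_le hC hθ0 hθ1.le fun r (hr : r < n + 1 + a) => h r (by omega)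
      have htail := ih (shift x) (shift y) fun u hu => h (u + 1) (by omega)
      rw [birkhoff_succ', birkhoff_succ', Finset.sum_range_succ]
      calc |f x + birkhoff f n (shift x) - (f y + birkhoff f n (shift y))|
          ≤ |f x - f y| + |birkhoff f n (shift x) - birkhoff f n (shift y)| := by
            rw [add_sub_add_comm]; exact abs_add_le _ _
        _ ≤ _ := by
            rw [show n + 1 + a = a + (n + 1) by ring, pow_add] at hhead; linarith
  have hsum : ∑ i ∈ Finset.range n, θ ^ (i + 1) ≤ 1 / (1 - θ) := by
    calc ∑ i ∈ Finset.range n, θ ^ (i + 1) = ∑ i ∈ Finset.Ico 1 (n + 1), θ ^ i := by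
          rw [Finset.sum_Ico_eq_sum_range]; simp [add_comm]
      _ ≤ θ ^ 1 / (1 - θ) := geom_sum_Ico_le_of_lt_one hθ0 hθ1
      _ ≤ 1 / (1 - θ) := by rw [pow_one]; gcongr
  calc _ ≤ C * θ ^ a * ∑ i ∈ Finset.range n, θ ^ (i + 1) := hgeom n x y h
    _ ≤ C * θ ^ a * (1 / (1 - θ)) := by gcongr
    _ = C * θ ^ a / (1 - θ) := by ring

end LipWrt

lemma MeasureTheory.MeasurePreserving.integral_birkhoffSum {α : Type*} [MeasurableSpace α]
    {μ : Measure α} {T : α → α} (hT : MeasurePreserving T μ μ) {g : α → ℝ}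
    (hint : Integrable g μ) (n : ℕ) :
    ∫ x, birkhoffSum T g n x ∂μ = n * ∫ x, g x ∂μ := by
  have hcomp : ∀ k, ∫ x, g (T^[k] x) ∂μ = ∫ x, g x ∂μ := fun k => by
    rw [← integral_map (hT.iterate k).measurable.aemeasurable
      (by rw [(hT.iterate k).map_eq]; exact hint.aestronglyMeasurable), (hT.iterate k).map_eq]
  simp only [birkhoffSum]
  rw [integral_finsetSum (f := fun k x => g (T^[k] x)) _ fun k _ =>
    ((hT.iterate k).integrable_comp_of_integrable hint : Integrable (fun x => g (T^[k] x)) μ)]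
  simp [hcomp]

lemma exists_birkhoff_gt {d : ℕ} (hd : 0 < d) {f : X d → ℝ} (hf : Continuous f) (N : ℕ)
    {δ : ℝ} (hδ : 0 < δ) : ∃ x : X d, N * beta f - δ < birkhoff f N x := by
  have hne : {r : ℝ | ∃ μ : Measure (X d), IsProbabilityMeasure μ ∧ μ.map shift = μ ∧
      r = ∫ x, f x ∂μ}.Nonempty :=
    ⟨_, Measure.dirac fun _ => ⟨0, hd⟩, inferInstance,
      Measure.map_dirac' continuous_shift.measurable _, rfl⟩
  obtain ⟨_, ⟨μ, hμ, hinv, rfl⟩, hlt⟩ :=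
    exists_lt_of_lt_csSup hne (sub_lt_self (beta f) (div_pos hδ N.cast_add_one_pos))
  have hmean : ∫ x, birkhoff f N x ∂μ = N * ∫ x, f x ∂μ :=
    (MeasurePreserving.mk continuous_shift.measurable hinv).integral_birkhoffSum
      (hf.integrable_of_hasCompactSupport (.of_compactSpace f)) N
  by_contra! hle
  have hbound : ∫ x, birkhoff f N x ∂μ ≤ N * beta f - δ := by
    simpa using integral_mono ((continuous_birkhoff hf N).integrable_of_hasCompactSupport
      (.of_compactSpace _)) (integrable_const (μ := μ) (N * beta f - δ)) hle
  have hgap : (N : ℝ) * (δ / (N + 1)) < δ := by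
    rw [← mul_div_assoc, div_lt_iff₀ N.cast_add_one_pos]; linarith
  nlinarith [mul_le_mul_of_nonneg_left hlt.le N.cast_nonneg]

def deleteBlock {d : ℕ} (x : X d) (i p : ℕ) : X d := fun t => if t < i then x t else x (t + p)

lemma shift_iterate_deleteBlock {d : ℕ} (x : X d) (i p : ℕ) :
    shift^[i] (deleteBlock x i p) = shift^[i + p] x := by
  funext t
  simp only [shift_iterate_apply, deleteBlock, show ¬t + i < i by omega, if_false]
  congr 1
  omega

lemma birkhoff_deleteBlock {d : ℕ} (f : X d → ℝ) (x : X d) {i p n : ℕ} (hn : i + p ≤ n) :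
    birkhoff f n x = birkhoff f (n - p) (deleteBlock x i p)
      + (birkhoff f i x - birkhoff f i (deleteBlock x i p)) + birkhoff f p (shift^[i] x) := by
  obtain ⟨r, rfl⟩ := Nat.exists_eq_add_of_le hn
  rw [show i + p + r - p = i + r by omega, birkhoff_add, birkhoff_add, birkhoff_add,
    shift_iterate_deleteBlock]
  ring

section NoGoodPeriodicPoint

variable {d : ℕ} {θ C ε : ℝ} {f : X d → ℝ}

lemma birkhoff_le_of_isPeriodicPt (hε : 0 ≤ ε)
    (hI : ∀ p : X d, IsPeriodic p → ε ≤ Ifun f p) {n : ℕ} {p : X d}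
    (hp : Function.IsPeriodicPt shift n p) (hn : 0 < n) :
    birkhoff f n p ≤ n * beta f - ε := by
  obtain ⟨k, hk⟩ := hp.minimalPeriod_dvd
  have hk1 : (1 : ℝ) ≤ k := Nat.one_le_cast.mpr (Nat.pos_of_mul_pos_left (hk ▸ hn))
  have hloop : ε ≤ Ifun f p := hI p ⟨n, hn, hp⟩
  rw [hk, mul_comm, birkhoff_mul_of_isPeriodicPt f (Function.isPeriodicPt_minimalPeriod shift p)]
  unfold Ifun minPer at hloop
  push_cast
  nlinarith [mul_le_mul_of_nonneg_left hloop (k.cast_nonneg : (0 : ℝ) ≤ k),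
    mul_le_mul_of_nonneg_right hk1 hε]

lemma birkhoff_le_mul_beta_add (hθ0 : 0 ≤ θ) (hθ1 : θ < 1) (hf : LipWrt θ C f) (hC : 0 ≤ C)
    (hε : 0 ≤ ε) (hI : ∀ p : X d, IsPeriodic p → ε ≤ Ifun f p) (y : X d) (n : ℕ) :
    birkhoff f n y ≤ n * beta f + C / (1 - θ) := by
  rcases n.eq_zero_or_pos with rfl | hn
  · simpa [birkhoff] using div_nonneg hC (sub_nonneg.mpr hθ1.le)
  have hclose := hf.abs_birkhoff_sub_le hC hθ0 hθ1 (x := y) (y := repeatBlock y n) (a := 0)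
    fun u hu => (repeatBlock_apply_of_lt y (p := n) (by omega)).symm
  have hloop := birkhoff_le_of_isPeriodicPt hε hI (isPeriodicPt_repeatBlock y n) hn
  rw [pow_zero, mul_one] at hclose
  linarith [(abs_le.mp hclose).2]

lemma exists_birkhoff_gain (hθ0 : 0 ≤ θ) (hθ1 : θ < 1) (hf : LipWrt θ C f) (hC : 0 ≤ C)
    (hε : 0 ≤ ε) (hI : ∀ p : X d, IsPeriodic p → ε ≤ Ifun f p) {m : ℕ}
    (hm : C * θ ^ m / (1 - θ) ≤ ε / 4) (x : X d) {n : ℕ} (hn : d ^ m ≤ n) :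
    ∃ x' n', n - d ^ m ≤ n' ∧
      birkhoff f n x - n * beta f + ε / 2 ≤ birkhoff f n' x' - n' * beta f := by
  obtain ⟨i, p, hp, hip, hblock⟩ := exists_block_repeat x m
  -- The loop `x i, …, x (i + p - 1)` shadows a periodic orbit, so it falls short of `p β(f)` by
  -- at least `ε - ε / 4`; cutting it out moves the prefix Birkhoff sum by at most `ε / 4`.
  have hloop_close := hf.abs_birkhoff_sub_le hC hθ0 hθ1 (x := shift^[i] x) (n := p)
    fun u hu => (repeatBlock_apply_of_forall_lt (fun t ht => by
      simp only [shift_iterate_apply]; convert hblock t ht using 2 <;> omega) u hu).symm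
  have hloop := birkhoff_le_of_isPeriodicPt hε hI (isPeriodicPt_repeatBlock (shift^[i] x) p) hp
  have hprefix_close := hf.abs_birkhoff_sub_le hC hθ0 hθ1 (x := x) (y := deleteBlock x i p)
    (n := i) (a := m) fun u hu => by
      unfold deleteBlock
      split_ifs with hui
      · rfl
      · rw [show u + p = i + p + (u - i) by omega, hblock _ (by omega)]; congr 1; omega
  refine ⟨deleteBlock x i p, n - p, by omega, ?_⟩
  rw [birkhoff_deleteBlock f x (by omega : i + p ≤ n), Nat.cast_sub (by omega : p ≤ n)]
  linarith [(abs_le.mp hloop_close).2, (abs_le.mp hprefix_close).2]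

lemma exists_birkhoff_gain_iterate (hθ0 : 0 ≤ θ) (hθ1 : θ < 1) (hf : LipWrt θ C f)
    (hC : 0 ≤ C) (hε : 0 ≤ ε) (hI : ∀ p : X d, IsPeriodic p → ε ≤ Ifun f p) {m : ℕ}
    (hm : C * θ ^ m / (1 - θ) ≤ ε / 4) (r : ℕ) :
    ∀ (x : X d) (n : ℕ), r * d ^ m ≤ n → ∃ (x' : X d) (n' : ℕ),
      birkhoff f n x - n * beta f + r * (ε / 2) ≤ birkhoff f n' x' - n' * beta f := by
  induction r with
  | zero => exact fun x n _ => ⟨x, n, by simp⟩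
  | succ r ih =>
    intro x n hn
    rw [add_mul, one_mul] at hn
    obtain ⟨x₁, n₁, hn₁, hgain₁⟩ :=
      exists_birkhoff_gain hθ0 hθ1 hf hC hε hI hm x (n := n) (by omega)
    obtain ⟨x₂, n₂, hgain₂⟩ := ih x₁ n₁ (by omega)
    refine ⟨x₂, n₂, ?_⟩
    push_cast
    linarith

lemma exists_Ifun_lt (hd : 0 < d) (hθ0 : 0 ≤ θ) (hθ1 : θ < 1) (hf : LipWrt θ C f)
    (hC : 0 ≤ C) (hε : 0 < ε) : ∃ p : X d, IsPeriodic p ∧ Ifun f p < ε := by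
  by_contra! hI
  obtain ⟨m, hm⟩ : ∃ m : ℕ, C * θ ^ m / (1 - θ) ≤ ε / 4 := by
    have hsmall : Tendsto (fun m : ℕ => C * θ ^ m / (1 - θ)) atTop (𝓝 0) := by
      simpa using ((tendsto_pow_atTop_nhds_zero_of_lt_one hθ0 hθ1).const_mul C).div_const _
    exact (hsmall.eventually (ge_mem_nhds (by positivity))).exists
  obtain ⟨R, hR⟩ := exists_nat_gt ((C / (1 - θ) + ε / 2) / (ε / 2))
  obtain ⟨x, hx⟩ :=
    exists_birkhoff_gt hd (hf.continuous hC hθ0 hθ1) (R * d ^ m) (half_pos hε)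
  obtain ⟨y, n, hgain⟩ := exists_birkhoff_gain_iterate hθ0 hθ1 hf hC hε.le hI hm R x _ le_rfl
  have hbound := birkhoff_le_mul_beta_add hθ0 hθ1 hf hC hε.le hI y n
  rw [div_lt_iff₀ (half_pos hε)] at hR
  push_cast at hx hgain
  linarith

end NoGoodPeriodicPoint

theorem stmt3 (d : ℕ) (hd : 0 < d) (θ C : ℝ) (hθ0 : 0 < θ) (hθ1 : θ < 1)
    (f : X d → ℝ) (hf : LipWrt θ C f) :
    ∀ ε > (0 : ℝ), ∃ x : X d, IsPeriodic x ∧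
      (minPer x : ℝ) * (beta f - birkhoff f (minPer x) x / (minPer x : ℝ)) < ε := by
  intro ε hε
  obtain ⟨x, hx, hlt⟩ :=
    exists_Ifun_lt hd hθ0.le hθ1 (hf.mono_const (le_abs_self C) hθ0.le) (abs_nonneg C) hε
  have hper : (0 : ℝ) < minPer x :=
    Nat.cast_pos.mpr (Function.minimalPeriod_pos_of_mem_periodicPts hx)
  refine ⟨x, hx, ?_⟩
  rwa [mul_sub, mul_div_cancel₀ _ hper.ne']
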